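/- arXiv:1805.05941 — 5 statements merged into one kernel-verified Lean document; each statement's English description precedes it below -/
import Mathlib

section
/- Let z be a word in a free monoid A*. If z has periods u and v such that |z| ≥ |u| + |v|, then z has a period w such that u = w^s and v = w^t for some natural numbers s, t. -/
/-!
If `u` and `v` are periods of `z`, then `z` is a prefix of a power of each of them, so the
lengths `|u|` and `|v|` are periods of `z` in the positional sense. Since `|u| + |v| ≤ |z|`,
the Fine–Wilf theorem (`List.HasPeriod.gcd`) makes `g = gcd |u| |v|` a positional period too.
A word with positional period `g ≤ |z|` agrees with the powers of its prefix `w` of length `g`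
wherever both are defined. Hence `w` is a period of `z`, and `u` and `v`, being prefixes of `z`
whose lengths are multiples of `g`, are powers of `w`.
-/

/-- `n`-th power of a word in the free monoid of lists. -/
def listPow {A : Type*} (v : List A) (n : ℕ) : List A := (List.replicate n v).flatten

/-- `v` is a period of `u`: for some `n ≥ 1`, `v^n` is a prefix of `u`
and `u` is a prefix of `v^(n+1)`. -/
def IsPeriodWord {A : Type*} (v u : List A) : Prop :=
  ∃ n : ℕ, 1 ≤ n ∧ listPow v n <+: u ∧ u <+: listPow v (n + 1)

section ListPow

variable {A : Type*} (v : List A)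

theorem listPow_succ (n : ℕ) : listPow v (n + 1) = v ++ listPow v n := by
  simp [listPow, List.replicate_succ]

theorem listPow_succ' (n : ℕ) : listPow v (n + 1) = listPow v n ++ v := by
  simp [listPow, List.replicate_succ']

@[simp]
theorem listPow_one : listPow v 1 = v := by simp [listPow]

@[simp]
theorem length_listPow (n : ℕ) : (listPow v n).length = n * v.length := by
  simp [listPow]

theorem listPow_isPrefix_listPow {m n : ℕ} (hmn : m ≤ n) : listPow v m <+: listPow v n := by
  induction n, hmn using Nat.le_induction with
  | base => exact List.prefix_refl _
  | succ n _ ih => exact ih.trans (listPow_succ' v n ▸ List.prefix_append _ _)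

theorem getElem?_listPow {n i : ℕ} (hi : i < n * v.length) :
    (listPow v n)[i]? = v[i % v.length]? := by
  induction n generalizing i with
  | zero => omega
  | succ n ih =>
    rw [listPow_succ, List.getElem?_append]
    split_ifs with hiv
    · rw [Nat.mod_eq_of_lt hiv]
    · rw [ih (by rw [Nat.succ_mul] at hi; omega), ← Nat.mod_eq_sub_mod (by omega)]

theorem hasPeriod_listPow (n : ℕ) : (listPow v n).HasPeriod v.length := by
  cases n with
  | zero => exact List.hasPeriod_empty _
  | succ n =>
    rw [List.HasPeriod, listPow_succ, List.take_left' rfl, List.prefix_append_right_inj,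
      ← listPow_succ]
    exact listPow_isPrefix_listPow v n.le_succ

end ListPow

namespace IsPeriodWord

variable {A : Type*} {v u : List A}

theorem isPrefix (h : IsPeriodWord v u) : v <+: u := by
  obtain ⟨n, hn, hvu, -⟩ := h
  exact listPow_one v ▸ (listPow_isPrefix_listPow v hn).trans hvu

theorem hasPeriod (h : IsPeriodWord v u) : u.HasPeriod v.length := by
  obtain ⟨n, -, -, huv⟩ := h
  exact (hasPeriod_listPow v (n + 1)).infix huv.isInfix

theorem length_pos (h : IsPeriodWord v u) (hu : u ≠ []) : 0 < v.length := by
  obtain ⟨n, -, -, huv⟩ := h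
  by_contra! hv
  simp_all [List.length_eq_zero_iff.mp (Nat.le_zero.mp hv), listPow]

end IsPeriodWord

namespace List.HasPeriod

variable {A : Type*} {z x : List A} {p : ℕ}

theorem take_listPow_take (hp : z.HasPeriod p) (hpz : p ≤ z.length) (k : ℕ) :
    (listPow (z.take p) k).take z.length = z.take (k * p) := by
  have hw : (z.take p).length = p := by simp [hpz]
  apply List.ext_getElem?
  intro i
  simp only [List.getElem?_take]
  by_cases hiz : i < z.length <;> by_cases hik : i < k * p <;>
    simp only [hiz, hik, if_true, if_false]
  · have hp0 : 0 < p := Nat.pos_of_mul_pos_left (by omega : 0 < k * p)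
    rw [getElem?_listPow _ (by rwa [hw]), hw, List.getElem?_take, if_pos (Nat.mod_lt i hp0),
      hp.getElem?_mod p i z hiz]
  · exact List.getElem?_eq_none (by simp only [length_listPow, hw]; omega)
  · exact (List.getElem?_eq_none (by omega)).symm

theorem listPow_take_eq_take (hp : z.HasPeriod p) (hpz : p ≤ z.length) {k : ℕ}
    (hk : k * p ≤ z.length) : listPow (z.take p) k = z.take (k * p) := by
  rw [← hp.take_listPow_take hpz]
  exact (List.take_of_length_le (by simpa [hpz] using hk)).symm

theorem isPrefix_listPow_take (hp : z.HasPeriod p) (hpz : p ≤ z.length) {k : ℕ}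
    (hk : z.length ≤ k * p) : z <+: listPow (z.take p) k := by
  have h := hp.take_listPow_take hpz k
  rw [List.take_of_length_le hk] at h
  exact List.prefix_iff_eq_take.mpr h.symm

theorem eq_listPow_take_of_isPrefix (hp : z.HasPeriod p) (hpz : p ≤ z.length) (hx : x <+: z)
    {k : ℕ} (hxk : x.length = k * p) : x = listPow (z.take p) k := by
  rw [hp.listPow_take_eq_take hpz (hxk ▸ hx.length_le), ← hxk]
  exact List.prefix_iff_eq_take.mp hx

theorem isPeriodWord_take (hp : z.HasPeriod p) (hp0 : 0 < p) (hpz : p ≤ z.length) :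
    IsPeriodWord (z.take p) z := by
  refine ⟨z.length / p, (Nat.one_le_div_iff hp0).mpr hpz, ?_, ?_⟩
  · rw [hp.listPow_take_eq_take hpz (Nat.div_mul_le_self _ _)]
    exact List.take_prefix _ _
  · refine hp.isPrefix_listPow_take hpz ?_
    rw [add_one_mul]
    exact (Nat.lt_div_mul_add hp0).le

end List.HasPeriod

theorem periodicity_lemma {A : Type*} (z u v : List A)
    (hu : IsPeriodWord u z) (hv : IsPeriodWord v z)
    (hlen : u.length + v.length ≤ z.length) :
    ∃ w : List A, IsPeriodWord w z ∧
      ∃ s t : ℕ, u = listPow w s ∧ v = listPow w t := by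
  rcases eq_or_ne z [] with rfl | hz
  · obtain ⟨rfl, rfl⟩ : u = [] ∧ v = [] := by simpa using hlen
    exact ⟨[], hu, 0, 0, rfl, rfl⟩
  have hu0 : 0 < u.length := hu.length_pos hz
  set g := u.length.gcd v.length
  have hper : z.HasPeriod g := hu.hasPeriod.gcd hv.hasPeriod (by omega)
  have hgz : g ≤ z.length := (Nat.gcd_le_left _ hu0).trans (by omega)
  refine ⟨z.take g, hper.isPeriodWord_take (Nat.gcd_pos_of_pos_left _ hu0) hgz,
    u.length / g, v.length / g, ?_, ?_⟩
  · exact hper.eq_listPow_take_of_isPrefix hgz hu.isPrefix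
      (Nat.div_mul_cancel (Nat.gcd_dvd_left _ _)).symm
  · exact hper.eq_listPow_take_of_isPrefix hgz hv.isPrefix
      (Nat.div_mul_cancel (Nat.gcd_dvd_right _ _)).symm
end

section
/- Let X be a δ-hyperbolic geodesic space, let p and q be (κ,ε)-quasi-geodesics with d(p₋, q₋) ≤ r and d(p₊, q₊) ≤ r, and let μ = μ(δ,κ,ε) be the quasi-geodesic stability constant. If A is a point on p with d(A, p₋) > r + 2δ + μ and d(A, p₊) > r + 2δ + μ, then A lies in the 2(δ+μ)-neighborhood of q. -/
/-- `s` is (the image of) a geodesic segment from `x` to `y`. -/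
def IsGeodesicSegment {Y : Type*} [MetricSpace Y] (s : Set Y) (x y : Y) : Prop :=
  ∃ γ : ℝ → Y, γ 0 = x ∧ γ (dist x y) = y ∧ s = γ '' Set.Icc 0 (dist x y) ∧
    ∀ u ∈ Set.Icc 0 (dist x y), ∀ v ∈ Set.Icc 0 (dist x y), dist (γ u) (γ v) = |u - v|

/-- Every point of `A` is within distance `c` of some point of `B`. -/
def InNbhd {Y : Type*} [MetricSpace Y] (A B : Set Y) (c : ℝ) : Prop :=
  ∀ p ∈ A, ∃ q ∈ B, dist p q ≤ c

/-- Every point of `A` is within distance strictly less than `c` of some point of `B`. -/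
def InNbhdLt {Y : Type*} [MetricSpace Y] (A B : Set Y) (c : ℝ) : Prop :=
  ∀ p ∈ A, ∃ q ∈ B, dist p q < c

/-- `Y` is a geodesic space: any two points are joined by a geodesic segment. -/
def IsGeodesicSpace (Y : Type*) [MetricSpace Y] : Prop :=
  ∀ x y : Y, ∃ s : Set Y, IsGeodesicSegment s x y

/-- `Y` is `δ`-hyperbolic: every geodesic triangle is `δ`-slim. -/
def SlimTriangles (Y : Type*) [MetricSpace Y] (δ : ℝ) : Prop :=
  ∀ (x y z : Y) (s₁ s₂ s₃ : Set Y),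
    IsGeodesicSegment s₁ x y → IsGeodesicSegment s₂ y z → IsGeodesicSegment s₃ x z →
      InNbhd s₁ (s₂ ∪ s₃) δ ∧ InNbhd s₂ (s₁ ∪ s₃) δ ∧ InNbhd s₃ (s₁ ∪ s₂) δ
/-- `f` restricted to `[a,b]` is a `(κ,ε)`-quasi-geodesic. -/
def IsQuasiGeodesicOn {Y : Type*} [MetricSpace Y] (κ ε : ℝ) (f : ℝ → Y) (a b : ℝ) : Prop :=
  ∀ s ∈ Set.Icc a b, ∀ t ∈ Set.Icc a b,
    (1 / κ) * |s - t| - ε ≤ dist (f s) (f t) ∧ dist (f s) (f t) ≤ κ * |s - t| + ε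

/-- `μ` is a stability (Morse) constant for `(κ,ε)`-quasi-geodesics in `Y`:
any `(κ,ε)`-quasi-geodesic is within Hausdorff distance less than `μ` of any
geodesic segment joining its endpoints. -/
def IsStabilityConstant (Y : Type*) [MetricSpace Y] (μ κ ε : ℝ) : Prop :=
  ∀ (f : ℝ → Y) (a b : ℝ), a ≤ b → IsQuasiGeodesicOn κ ε f a b →
    ∀ s : Set Y, IsGeodesicSegment s (f a) (f b) →
      InNbhdLt (f '' Set.Icc a b) s μ ∧ InNbhdLt s (f '' Set.Icc a b) μ


lemma seg_dist_bound {Y : Type*} [MetricSpace Y] {s : Set Y} {x y : Y}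
    (h : IsGeodesicSegment s x y) {z : Y} (hz : z ∈ s) :
    dist z x ≤ dist x y ∧ dist z y ≤ dist x y := by
  obtain ⟨γ, h0, hd, hs, hiso⟩ := h
  rw [hs] at hz
  obtain ⟨t, ht, rfl⟩ := hz
  have h0m : (0 : ℝ) ∈ Set.Icc 0 (dist x y) := ⟨le_refl _, dist_nonneg⟩
  have hdm : dist x y ∈ Set.Icc 0 (dist x y) := ⟨dist_nonneg, le_refl _⟩
  constructor
  · have := hiso t ht 0 h0m
    rw [h0] at this
    rw [this]
    rw [abs_of_nonneg (by simpa using ht.1)]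
    simpa using ht.2
  · have := hiso t ht (dist x y) hdm
    rw [hd] at this
    rw [this, abs_of_nonpos (by linarith [ht.2])]
    linarith [ht.1]

theorem quasi_geodesic_interior_point_close {Y : Type*} [MetricSpace Y] (δ κ ε μ r : ℝ)
    (hδ : 0 ≤ δ) (hκ : 1 ≤ κ) (hε : 0 ≤ ε) (hr : 0 ≤ r)
    (hgeo : IsGeodesicSpace Y) (hhyp : SlimTriangles Y δ)
    (hμ : IsStabilityConstant Y μ κ ε)
    (p q : ℝ → Y) (a b c d : ℝ) (hab : a ≤ b) (hcd : c ≤ d)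
    (hp : IsQuasiGeodesicOn κ ε p a b) (hq : IsQuasiGeodesicOn κ ε q c d)
    (hstart : dist (p a) (q c) ≤ r) (hend : dist (p b) (q d) ≤ r)
    (u : ℝ) (hu : u ∈ Set.Icc a b)
    (hA₁ : r + 2 * δ + μ < dist (p u) (p a))
    (hA₂ : r + 2 * δ + μ < dist (p u) (p b)) :
    ∃ v ∈ Set.Icc c d, dist (p u) (q v) ≤ 2 * (δ + μ) := by
  obtain ⟨sp, hsp⟩ := hgeo (p a) (p b)
  obtain ⟨sq, hsq⟩ := hgeo (q c) (q d)
  obtain ⟨ebd, hebd⟩ := hgeo (p b) (q d)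
  obtain ⟨g, hg⟩ := hgeo (p a) (q d)
  obtain ⟨eca, heca⟩ := hgeo (q c) (p a)
  -- stability for p : p u is close to sp
  obtain ⟨x, hxsp, hxd⟩ := (hμ p a b hab hp sp hsp).1 (p u) ⟨u, hu, rfl⟩
  -- triangle p a, p b, q d
  obtain ⟨y, hy, hyd⟩ := (hhyp (p a) (p b) (q d) sp ebd g hsp hebd hg).1 x hxsp
  rcases hy with hy | hy
  · -- y on [p b, q d] : contradiction with hA₂
    have := (seg_dist_bound hebd hy).1
    have h1 := dist_triangle (p u) x (p b)
    have h2 := dist_triangle x y (p b)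
    linarith [hend]
  · -- y on g = [p a, q d]; triangle q c, p a, q d
    obtain ⟨z, hz, hzd⟩ := (hhyp (q c) (p a) (q d) eca g sq heca hg hsq).2.1 y hy
    rcases hz with hz | hz
    · -- z on [q c, p a] : contradiction with hA₁
      have := (seg_dist_bound heca hz).2
      have h1 := dist_triangle (p u) x (p a)
      have h2 := dist_triangle x y (p a)
      have h3 := dist_triangle y z (p a)
      linarith [hstart, dist_comm (p a) (q c) ▸ hstart]
    · -- z on sq : stability for q
      obtain ⟨w, hw, hwd⟩ := (hμ q c d hcd hq sq hsq).2 z hz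
      obtain ⟨v, hv, rfl⟩ := hw
      refine ⟨v, hv, ?_⟩
      have h1 := dist_triangle (p u) x (q v)
      have h2 := dist_triangle x y (q v)
      have h3 := dist_triangle y z (q v)
      linarith
end

section
/- Let X be a δ-hyperbolic geodesic space and let p : [a,b] → X be an (8δ+1)-local geodesic. Then p is a (3, 2δ)-quasi-geodesic. -/
/-- `p` restricted to `[a,b]` (parametrized by arclength) is a `k`-local geodesic. -/
def IsLocalGeodesicOn {Y : Type*} [MetricSpace Y] (k : ℝ) (p : ℝ → Y) (a b : ℝ) : Prop :=
  ∀ s t : ℝ, a ≤ s → s ≤ t → t ≤ b → t - s ≤ k → dist (p s) (p t) = t - s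

lemma lgqg_seg_sum {Y : Type*} [MetricSpace Y] {s : Set Y} {x y : Y}
    (h : IsGeodesicSegment s x y) {w : Y} (hw : w ∈ s) :
    dist x w + dist w y = dist x y := by
  obtain ⟨γ, h0, h1, himg, hiso⟩ := h
  rw [himg] at hw
  obtain ⟨u, hu, rfl⟩ := hw
  have h0mem : (0:ℝ) ∈ Set.Icc 0 (dist x y) := ⟨le_refl _, dist_nonneg⟩
  have hdmem : dist x y ∈ Set.Icc 0 (dist x y) := ⟨dist_nonneg, le_refl _⟩
  have e1 := hiso 0 h0mem u hu
  rw [h0] at e1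
  have e2 := hiso u hu (dist x y) hdmem
  rw [h1] at e2
  rw [e1, e2, zero_sub, abs_neg, abs_of_nonneg hu.1,
    abs_of_nonpos (sub_nonpos.2 hu.2), neg_sub]
  ring

lemma lgqg_core {Y : Type*} [MetricSpace Y] {δ : ℝ}
    (hgeo : IsGeodesicSpace Y) (hhyp : SlimTriangles Y δ)
    {x0 A M B : Y} {seg : Set Y} (hseg : IsGeodesicSegment seg A B)
    (hM : M ∈ seg) (hα : 2*δ < dist A M)
    (hIH : dist x0 A + dist A M - 2*δ ≤ dist x0 M) :
    dist x0 M + dist M B - 2*δ ≤ dist x0 B := by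
  obtain ⟨s₂, hs₂⟩ := hgeo B x0
  obtain ⟨s₃, hs₃⟩ := hgeo A x0
  obtain ⟨h₁, -, -⟩ := hhyp A B x0 seg s₂ s₃ hseg hs₂ hs₃
  obtain ⟨w, hw, hdw⟩ := h₁ M hM
  have tMB : dist M B ≤ dist M w + dist w B := dist_triangle M w B
  have tx0M : dist x0 M ≤ dist x0 w + dist w M := dist_triangle x0 w M
  have tAM : dist A M ≤ dist A w + dist w M := dist_triangle A w M
  have e1 : dist M w = dist w M := dist_comm M w
  rcases hw with hw | hw
  · have hsum : dist B w + dist w x0 = dist B x0 := lgqg_seg_sum hs₂ hw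
    have e2 : dist w B = dist B w := dist_comm w B
    have e3 : dist x0 w = dist w x0 := dist_comm x0 w
    have e4 : dist B x0 = dist x0 B := dist_comm B x0
    linarith
  · have hsum : dist A w + dist w x0 = dist A x0 := lgqg_seg_sum hs₃ hw
    have e3 : dist x0 w = dist w x0 := dist_comm x0 w
    have e4 : dist A x0 = dist x0 A := dist_comm A x0
    linarith

lemma lgqg_subseg {Y : Type*} [MetricSpace Y] {δ : ℝ} {p : ℝ → Y} {a b : ℝ}
    (hp : IsLocalGeodesicOn (8*δ+1) p a b) {rA rB : ℝ}
    (h1 : a ≤ rA) (h2 : rA ≤ rB) (h3 : rB ≤ b) (h4 : rB - rA ≤ 8*δ+1) :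
    IsGeodesicSegment ((fun u => p (rA + u)) '' Set.Icc 0 (dist (p rA) (p rB)))
      (p rA) (p rB) := by
  have hd : dist (p rA) (p rB) = rB - rA := hp rA rB h1 h2 h3 h4
  refine ⟨fun u => p (rA + u), by simp, ?_, rfl, ?_⟩
  · rw [hd]; norm_num
  · intro u hu v hv
    rw [hd] at hu hv
    rcases le_total u v with huv | huv
    · rw [hp (rA+u) (rA+v) (by linarith [hu.1]) (by linarith) (by linarith [hv.2])
        (by linarith [hu.1, hv.2]), abs_of_nonpos (by linarith)]
      ring
    · rw [dist_comm, hp (rA+v) (rA+u) (by linarith [hv.1]) (by linarith)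
        (by linarith [hu.2]) (by linarith [hv.1, hu.2]), abs_of_nonneg (by linarith)]
      ring

set_option maxHeartbeats 1600000 in
lemma lgqg_lower {Y : Type*} [MetricSpace Y] {δ : ℝ} (hδ : 0 ≤ δ)
    (hgeo : IsGeodesicSpace Y) (hhyp : SlimTriangles Y δ)
    {p : ℝ → Y} {a b : ℝ} (hp : IsLocalGeodesicOn (8*δ+1) p a b)
    {s t : ℝ} (has : a ≤ s) (hst : s ≤ t) (htb : t ≤ b) :
    (t - s)/3 - 2*δ ≤ dist (p s) (p t) := by
  obtain ⟨h, hh⟩ : ∃ h : ℝ, h = 4*δ + 1/2 := ⟨_, rfl⟩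
  have hhpos : 0 < h := by linarith
  by_cases hcase : t - s ≤ h
  · rw [hp s t has hst htb (by linarith)]
    linarith
  push_neg at hcase
  -- progress chain
  have chain : ∀ i : ℕ, s + ((i:ℝ)+1)*h ≤ t →
      dist (p s) (p (s + (i:ℝ)*h)) + (h - 2*δ) ≤ dist (p s) (p (s + ((i:ℝ)+1)*h)) := by
    intro i
    induction i with
    | zero =>
      intro hi
      push_cast at hi ⊢
      have e0 : s + (0:ℝ)*h = s := by ring
      have e1 : dist (p s) (p (s + ((0:ℝ)+1)*h)) = (s + ((0:ℝ)+1)*h) - s :=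
        hp s (s + ((0:ℝ)+1)*h) has (by linarith) (by linarith) (by linarith)
      rw [e0, e1, dist_self]
      linarith
    | succ n IH =>
      intro hi
      push_cast at hi ⊢
      have hn0 : (0:ℝ) ≤ (n:ℝ) := Nat.cast_nonneg n
      have IH' := IH (by push_cast; linarith)
      have hrA : a ≤ s + (n:ℝ)*h := by nlinarith
      have hrB : s + ((n:ℝ)+2)*h ≤ t := by linarith
      have hAB : dist (p (s + (n:ℝ)*h)) (p (s + ((n:ℝ)+2)*h)) = 2*h := by
        rw [hp _ _ hrA (by linarith) (by linarith) (by linarith)]; ring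
      have hAM : dist (p (s + (n:ℝ)*h)) (p (s + ((n:ℝ)+1)*h)) = h := by
        rw [hp _ _ hrA (by linarith) (by linarith) (by linarith)]; ring
      have hMB : dist (p (s + ((n:ℝ)+1)*h)) (p (s + ((n:ℝ)+2)*h)) = h := by
        rw [hp _ _ (by linarith) (by linarith) (by linarith) (by linarith)]; ring
      have hseg := lgqg_subseg hp hrA (by linarith : s + (n:ℝ)*h ≤ s + ((n:ℝ)+2)*h)
        (by linarith) (by linarith)
      have hM : p (s + ((n:ℝ)+1)*h) ∈
          ((fun u => p ((s + (n:ℝ)*h) + u)) '' Set.Icc 0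
            (dist (p (s + (n:ℝ)*h)) (p (s + ((n:ℝ)+2)*h)))) := by
        refine ⟨h, ?_, by show p _ = p _; congr 1; ring⟩
        rw [hAB]
        exact ⟨by linarith, by linarith⟩
      have hcore := lgqg_core (x0 := p s) hgeo hhyp hseg hM (by rw [hAM]; linarith)
        (by rw [hAM]; linarith)
      rw [hMB] at hcore
      rw [show s + ((n:ℝ)+1+1)*h = s + ((n:ℝ)+2)*h from by ring]
      linarith
  have Echain : ∀ i : ℕ, s + (i:ℝ)*h ≤ t →
      (i:ℝ)*(h - 2*δ) ≤ dist (p s) (p (s + (i:ℝ)*h)) := by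
    intro i
    induction i with
    | zero =>
      intro _
      push_cast
      simpa using dist_nonneg
    | succ n IH =>
      intro hi
      push_cast at hi ⊢
      have hn0 : (0:ℝ) ≤ (n:ℝ) := Nat.cast_nonneg n
      have h1 := chain n (by linarith)
      have h2 := IH (by nlinarith)
      nlinarith
  -- final step
  obtain ⟨j, hj1, hjle, hjgt⟩ : ∃ j : ℕ, 1 ≤ j ∧ (j:ℝ)*h ≤ t - s ∧ t - s < ((j:ℝ)+1)*h := by
    have hL : 0 < t - s := by linarith
    have h1 : 1 ≤ ⌊(t-s)/h⌋₊ := Nat.le_floor (by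
      rw [Nat.cast_one, le_div_iff₀ hhpos]; linarith)
    refine ⟨⌊(t-s)/h⌋₊, h1, ?_, ?_⟩
    · have h3 := Nat.floor_le (le_of_lt (div_pos hL hhpos))
      calc (⌊(t-s)/h⌋₊ : ℝ)*h ≤ ((t-s)/h)*h := by nlinarith
        _ = t - s := by field_simp
    · have h3 := Nat.lt_floor_add_one ((t-s)/h)
      calc t - s = ((t-s)/h)*h := by field_simp
        _ < ((⌊(t-s)/h⌋₊ : ℝ)+1)*h := by nlinarith
  obtain ⟨m, rfl⟩ := Nat.exists_eq_add_of_le hj1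
  have hjle' : ((m:ℝ)+1)*h ≤ t - s := by push_cast at hjle; nlinarith [hjle]
  have hjgt' : t - s < ((m:ℝ)+2)*h := by push_cast at hjgt; nlinarith [hjgt]
  have hm0 : (0:ℝ) ≤ (m:ℝ) := Nat.cast_nonneg m
  have hmt : s + ((m:ℝ)+1)*h ≤ t := by linarith [hjle']
  have hrA : a ≤ s + (m:ℝ)*h := by nlinarith
  have hrAt : s + (m:ℝ)*h ≤ t := by nlinarith
  have hspan : t - (s + (m:ℝ)*h) ≤ 8*δ+1 := by linarith
  have hAB : dist (p (s + (m:ℝ)*h)) (p t) = t - (s + (m:ℝ)*h) :=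
    hp _ _ hrA hrAt htb hspan
  have hAM : dist (p (s + (m:ℝ)*h)) (p (s + ((m:ℝ)+1)*h)) = h := by
    rw [hp _ _ hrA (by linarith) (by linarith) (by linarith)]; ring
  have hMB : dist (p (s + ((m:ℝ)+1)*h)) (p t) = t - (s + ((m:ℝ)+1)*h) :=
    hp _ _ (by linarith) hmt htb (by linarith)
  have hseg := lgqg_subseg hp hrA hrAt htb hspan
  have hM : p (s + ((m:ℝ)+1)*h) ∈
      ((fun u => p ((s + (m:ℝ)*h) + u)) '' Set.Icc 0 (dist (p (s + (m:ℝ)*h)) (p t))) := by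
    refine ⟨h, ?_, by show p _ = p _; congr 1; ring⟩
    rw [hAB]
    exact ⟨by linarith, by linarith⟩
  have hIH' := chain m hmt
  have hfinal := lgqg_core (x0 := p s) hgeo hhyp hseg hM (by rw [hAM]; linarith)
    (by rw [hAM]; linarith)
  rw [hMB] at hfinal
  have hE := Echain (m+1) (by push_cast; linarith)
  push_cast at hE
  have hNd : 0 ≤ (m:ℝ)*δ := mul_nonneg hm0 hδ
  nlinarith [hE, hfinal, hjle', hNd, hm0, hδ, hh]

lemma lgqg_upper {Y : Type*} [MetricSpace Y] {δ : ℝ} (hδ : 0 ≤ δ)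
    {p : ℝ → Y} {a b : ℝ} (hp : IsLocalGeodesicOn (8*δ+1) p a b) :
    ∀ n : ℕ, ∀ s t : ℝ, a ≤ s → s ≤ t → t ≤ b → t - s ≤ (n:ℝ)*(8*δ+1) →
      dist (p s) (p t) ≤ t - s := by
  intro n
  induction n with
  | zero =>
    intro s t h1 h2 h3 h4
    norm_num at h4
    have : s = t := le_antisymm h2 (by linarith)
    subst this
    simp
  | succ n IH =>
    intro s t h1 h2 h3 h4
    by_cases hc : t - s ≤ 8*δ+1
    · rw [hp s t h1 h2 h3 hc]
    · push_neg at hc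
      have h5 : s ≤ t - (8*δ+1) := by linarith
      have h6 : t - (8*δ+1) ≤ b := by linarith
      have h7 := IH s (t - (8*δ+1)) h1 h5 h6 (by push_cast at h4 ⊢; linarith)
      have h8 := hp (t - (8*δ+1)) t (by linarith) (by linarith) h3 (by linarith)
      calc dist (p s) (p t) ≤ dist (p s) (p (t - (8*δ+1))) + dist (p (t - (8*δ+1))) (p t) :=
            dist_triangle _ _ _
        _ ≤ (t - (8*δ+1) - s) + (8*δ+1) := by rw [h8]; linarith
        _ = t - s := by ring

theorem local_geodesic_is_quasi_geodesic' {Y : Type*} [MetricSpace Y] (δ : ℝ) (hδ : 0 ≤ δ)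
    (hgeo : IsGeodesicSpace Y) (hhyp : SlimTriangles Y δ)
    (p : ℝ → Y) (a b : ℝ) (hab : a ≤ b)
    (hp : IsLocalGeodesicOn (8 * δ + 1) p a b) :
    ∀ s ∈ Set.Icc a b, ∀ t ∈ Set.Icc a b,
      (1 / 3) * |s - t| - 2*δ ≤ dist (p s) (p t) ∧ dist (p s) (p t) ≤ 3 * |s - t| + 2*δ := by
  have hp' : IsLocalGeodesicOn (8*δ+1) p a b := hp
  have key : ∀ s t : ℝ, a ≤ s → s ≤ t → t ≤ b →
      (1 / 3) * (t - s) - 2*δ ≤ dist (p s) (p t) ∧ dist (p s) (p t) ≤ 3 * (t - s) + 2*δ := by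
    intro s t h1 h2 h3
    constructor
    · have := lgqg_lower hδ hgeo hhyp hp' h1 h2 h3
      linarith
    · obtain ⟨n, hn⟩ := exists_nat_ge ((t - s)/(8*δ+1))
      have hkpos : (0:ℝ) < 8*δ+1 := by linarith
      have hle : t - s ≤ (n:ℝ)*(8*δ+1) := by
        rw [div_le_iff₀ hkpos] at hn
        linarith
      have := lgqg_upper hδ hp' n s t h1 h2 h3 hle
      linarith
  intro s hs t ht
  rcases le_total s t with hst | hst
  · have h1 := key s t hs.1 hst ht.2
    rw [abs_of_nonpos (by linarith : s - t ≤ 0), neg_sub]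
    exact h1
  · have h1 := key t s ht.1 hst hs.2
    rw [abs_of_nonneg (by linarith : 0 ≤ s - t), dist_comm]
    constructor
    · linarith [h1.1]
    · linarith [h1.2]

theorem local_geodesic_is_quasi_geodesic {Y : Type*} [MetricSpace Y] (δ : ℝ) (hδ : 0 ≤ δ)
    (hgeo : IsGeodesicSpace Y) (hhyp : SlimTriangles Y δ)
    (p : ℝ → Y) (a b : ℝ) (hab : a ≤ b)
    (hp : IsLocalGeodesicOn (8 * δ + 1) p a b) :
    IsQuasiGeodesicOn 3 (2 * δ) p a b := by
  unfold IsQuasiGeodesicOn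
  exact local_geodesic_is_quasi_geodesic' δ hδ hgeo hhyp p a b hab hp
end

section
/- Let X be a δ-hyperbolic geodesic space and let p : [a,b] → X be an (8δ+1)-local geodesic. Then the image of p is contained in the 2δ-neighborhood of any geodesic segment joining p(a) and p(b), and conversely any such geodesic segment is contained in the 3δ-neighborhood of the image of p. -/
/-!
Let `p T` be a point of `p` farthest from `s`, at distance `D`. The piece of `p` of length
`8δ + 1` centred at `T` (cut off at the ends of `[a, b]`) is a genuine geodesic. Joining its
endpoints to nearest points of `s` gives a quadrilateral with one side on `s`, and two slim
triangles put `p T` within `2δ` of one of the other three sides. The side on `s` gives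
`D ≤ 2δ`. A side through an endpoint at arclength `4δ + 1/2` from `T` would bring `p T` closer
to `s` than `D`; an endpoint at `p a` or `p b` already lies on `s`.

Conversely, a point `z` of `s` cuts `s` into two subsegments. The image of `p` is connected and
`2δ`-close to their union, so some `p t` is `2δ`-close to both, and the slim triangle with vertex
`p t` and base through `z` puts `z` within `3δ` of `p t`.
-/

open Set Metric

section Geodesic

variable {Y : Type*} [MetricSpace Y]

def IsometricOn (f : ℝ → Y) (I : Set ℝ) : Prop :=
  ∀ u ∈ I, ∀ v ∈ I, dist (f u) (f v) = |u - v|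

namespace IsometricOn

variable {f : ℝ → Y} {I J : Set ℝ} {c d : ℝ}

theorem mono (hf : IsometricOn f I) (hJ : J ⊆ I) : IsometricOn f J :=
  fun u hu v hv => hf u (hJ hu) v (hJ hv)

theorem continuousOn (hf : IsometricOn f I) : ContinuousOn f I :=
  (LipschitzOnWith.of_dist_le_mul (K := 1) fun u hu v hv => by
    rw [hf u hu v hv, Real.dist_eq, NNReal.coe_one, one_mul]).continuousOn

theorem isGeodesicSegment (hf : IsometricOn f (Icc c d)) (hcd : c ≤ d) :
    IsGeodesicSegment (f '' Icc c d) (f c) (f d) := by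
  have hlen : dist (f c) (f d) = d - c := by
    rw [hf c ⟨le_rfl, hcd⟩ d ⟨hcd, le_rfl⟩, abs_sub_comm, abs_of_nonneg (by linarith)]
  refine ⟨fun u => f (c + u), by simp, by rw [hlen]; norm_num, ?_, ?_⟩
  · rw [hlen, ← image_image f (c + ·), image_const_add_Icc]
    norm_num
  · intro u hu v hv
    rw [hlen] at hu hv
    rw [hf _ ⟨by linarith [hu.1], by linarith [hu.2]⟩ _ ⟨by linarith [hv.1], by linarith [hv.2]⟩]
    congr 1; ring

theorem isGeodesicSegment_rev (hf : IsometricOn f (Icc c d)) (hcd : c ≤ d) :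
    IsGeodesicSegment (f '' Icc c d) (f d) (f c) := by
  have hrev : IsometricOn (fun u => f (c + d - u)) (Icc c d) := fun u hu v hv => by
    rw [hf _ ⟨by linarith [hu.2], by linarith [hu.1]⟩ _ ⟨by linarith [hv.2], by linarith [hv.1]⟩,
      abs_sub_comm]
    congr 1; ring
  have himage : (fun u => f (c + d - u)) '' Icc c d = f '' Icc c d := by
    rw [← image_image f (c + d - ·), image_const_sub_Icc]
    congr 2 <;> ring
  simpa [himage] using hrev.isGeodesicSegment hcd

end IsometricOn

namespace IsGeodesicSegment

variable {S : Set Y} {x y : Y}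

theorem isCompact (hS : IsGeodesicSegment S x y) : IsCompact S := by
  obtain ⟨γ, -, -, rfl, hγ⟩ := hS
  exact isCompact_Icc.image_of_continuousOn (IsometricOn.continuousOn hγ)

theorem left_mem (hS : IsGeodesicSegment S x y) : x ∈ S := by
  obtain ⟨γ, h0, -, rfl, -⟩ := hS
  exact ⟨0, left_mem_Icc.2 dist_nonneg, h0⟩

theorem right_mem (hS : IsGeodesicSegment S x y) : y ∈ S := by
  obtain ⟨γ, -, hL, rfl, -⟩ := hS
  exact ⟨dist x y, right_mem_Icc.2 dist_nonneg, hL⟩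

theorem dist_add_dist (hS : IsGeodesicSegment S x y) {w : Y} (hw : w ∈ S) :
    dist x w + dist w y = dist x y := by
  obtain ⟨γ, h0, hL, rfl, hγ⟩ := hS
  obtain ⟨u, hu, rfl⟩ := hw
  have hL0 : (0 : ℝ) ≤ dist x y := dist_nonneg
  have h₁ : dist x (γ u) = u := by
    rw [← h0, hγ 0 ⟨le_rfl, hL0⟩ u hu, zero_sub, abs_neg, abs_of_nonneg hu.1]
  have h₂ : dist (γ u) y = dist x y - u := by
    conv_lhs => rw [← hL]
    rw [hγ u hu _ ⟨hL0, le_rfl⟩, abs_sub_comm, abs_of_nonneg (by linarith [hu.2])]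
  rw [h₁, h₂]; ring

theorem exists_subsegment (hS : IsGeodesicSegment S x y) {z₁ z₂ : Y} (h₁ : z₁ ∈ S)
    (h₂ : z₂ ∈ S) : ∃ S' ⊆ S, IsGeodesicSegment S' z₁ z₂ := by
  obtain ⟨γ, -, -, rfl, hγ⟩ := hS
  obtain ⟨u₁, hu₁, rfl⟩ := h₁
  obtain ⟨u₂, hu₂, rfl⟩ := h₂
  rcases le_total u₁ u₂ with h | h
  · exact ⟨γ '' Icc u₁ u₂, image_mono (Icc_subset_Icc hu₁.1 hu₂.2),
      (IsometricOn.mono hγ (Icc_subset_Icc hu₁.1 hu₂.2)).isGeodesicSegment h⟩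
  · exact ⟨γ '' Icc u₂ u₁, image_mono (Icc_subset_Icc hu₂.1 hu₁.2),
      (IsometricOn.mono hγ (Icc_subset_Icc hu₂.1 hu₁.2)).isGeodesicSegment_rev h⟩

theorem dist_add_dist_le (hS : IsGeodesicSegment S x y) {w : Y} (hw : w ∈ S) (z : Y) :
    dist z y + dist x z ≤ 2 * dist z w + dist x y := by
  linarith [hS.dist_add_dist hw, dist_triangle z w y, dist_triangle_right x z w]

-- Here `y` anchors `q`: `q = y`, or `q` is at distance `m` from `z` and within `D` of `y`.
theorem le_of_anchor {q w z : Y} {D c m : ℝ} (hS : IsGeodesicSegment S q y) (hw : w ∈ S)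
    (hzw : dist z w ≤ c) (hDy : D ≤ dist z y) (hq : q = y ∨ (dist q z = m ∧ dist q y ≤ D))
    (hcm : 2 * c < m) : D ≤ c := by
  have key := hS.dist_add_dist_le hw z
  rcases hq with rfl | ⟨hqz, hqy⟩
  · rw [dist_comm q z, dist_self] at key
    linarith
  · linarith

end IsGeodesicSegment

theorem IsLocalGeodesicOn.dist_eq_abs {k a b u v : ℝ} {p : ℝ → Y}
    (hp : IsLocalGeodesicOn k p a b) (hu : u ∈ Icc a b) (hv : v ∈ Icc a b) (huv : |u - v| ≤ k) :
    dist (p u) (p v) = |u - v| := by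
  rcases le_total u v with h | h
  · rw [abs_sub_comm, abs_of_nonneg (sub_nonneg.2 h)] at huv ⊢
    exact hp u v hu.1 h hv.2 huv
  · rw [abs_of_nonneg (sub_nonneg.2 h)] at huv ⊢
    rw [dist_comm]
    exact hp v u hv.1 h hu.2 huv

theorem IsLocalGeodesicOn.isometricOn {k a b c d : ℝ} {p : ℝ → Y}
    (hp : IsLocalGeodesicOn k p a b) (hc : a ≤ c) (hd : d ≤ b) (hk : d - c ≤ k) :
    IsometricOn p (Icc c d) := fun u hu v hv =>
  hp.dist_eq_abs ⟨hc.trans hu.1, hu.2.trans hd⟩ ⟨hc.trans hv.1, hv.2.trans hd⟩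
    (abs_sub_le_iff.2 ⟨by linarith [hu.2, hv.1], by linarith [hu.1, hv.2]⟩)

theorem IsLocalGeodesicOn.continuousOn {k a b : ℝ} {p : ℝ → Y}
    (hp : IsLocalGeodesicOn k p a b) (hk : 0 < k) : ContinuousOn p (Icc a b) := by
  rw [Metric.continuousOn_iff]
  intro t ht ε hε
  refine ⟨min ε k, lt_min hε hk, fun t' ht' htt' => ?_⟩
  rw [Real.dist_eq] at htt'
  rw [hp.dist_eq_abs ht' ht (htt'.le.trans (min_le_right _ _))]
  exact htt'.trans_le (min_le_left _ _)

theorem SlimTriangles.dist_le_of_mem {δ : ℝ}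
    (hhyp : SlimTriangles Y δ) (hgeo : IsGeodesicSpace Y) {S : Set Y} {y₁ y₂ z : Y}
    (hS : IsGeodesicSegment S y₁ y₂) (hz : z ∈ S) (x : Y) :
    dist z x ≤ δ + max (dist y₁ x) (dist y₂ x) := by
  obtain ⟨S₂, hS₂⟩ := hgeo y₂ x
  obtain ⟨S₁, hS₁⟩ := hgeo y₁ x
  obtain ⟨w, hw | hw, hzw⟩ := (hhyp y₁ y₂ x S S₂ S₁ hS hS₂ hS₁).1 z hz
  · linarith [hS₂.dist_add_dist hw, dist_triangle z w x, le_max_right (dist y₁ x) (dist y₂ x),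
      dist_nonneg (x := y₂) (y := w)]
  · linarith [hS₁.dist_add_dist hw, dist_triangle z w x, le_max_left (dist y₁ x) (dist y₂ x),
      dist_nonneg (x := y₁) (y := w)]

theorem IsPreconnected.exists_near_of_inNbhd_union {A K₁ K₂ : Set Y} {r : ℝ}
    (hA : IsPreconnected A) (hK₁ : IsCompact K₁) (hK₂ : IsCompact K₂)
    (hr : 0 ≤ r) (h : InNbhd A (K₁ ∪ K₂) r) (h₁ : (A ∩ K₁).Nonempty) (h₂ : (A ∩ K₂).Nonempty) :
    ∃ z ∈ A, ∃ y₁ ∈ K₁, ∃ y₂ ∈ K₂, dist z y₁ ≤ r ∧ dist z y₂ ≤ r := by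
  have hclosed (K : Set Y) : IsClosed {z | infDist z K ≤ r} :=
    isClosed_le (continuous_infDist_pt K) continuous_const
  have hmem {K : Set Y} {z : Y} (hz : z ∈ K) : infDist z K ≤ r :=
    (infDist_zero_of_mem hz).trans_le hr
  have hcover : A ⊆ {z | infDist z K₁ ≤ r} ∪ {z | infDist z K₂ ≤ r} := by
    intro z hz
    obtain ⟨y, hy₁ | hy₂, hzy⟩ := h z hz
    · exact Or.inl ((infDist_le_dist_of_mem hy₁).trans hzy)
    · exact Or.inr ((infDist_le_dist_of_mem hy₂).trans hzy)
  obtain ⟨z, hzA, hz₁, hz₂⟩ := isPreconnected_closed_iff.1 hA _ _ (hclosed K₁) (hclosed K₂)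
    hcover (h₁.mono fun z hz => ⟨hz.1, hmem hz.2⟩) (h₂.mono fun z hz => ⟨hz.1, hmem hz.2⟩)
  obtain ⟨y₁, hy₁, hd₁⟩ := hK₁.exists_infDist_eq_dist (h₁.mono inter_subset_right) z
  obtain ⟨y₂, hy₂, hd₂⟩ := hK₂.exists_infDist_eq_dist (h₂.mono inter_subset_right) z
  exact ⟨z, hzA, y₁, hy₁, y₂, hy₂, hd₁ ▸ hz₁, hd₂ ▸ hz₂⟩

theorem InNbhd.geodesicSegment_of_isPreconnected {δ : ℝ}
    (hδ : 0 ≤ δ) (hgeo : IsGeodesicSpace Y) (hhyp : SlimTriangles Y δ) {A s : Set Y} {x y : Y}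
    (hs : IsGeodesicSegment s x y) (hA : IsPreconnected A) (hx : x ∈ A) (hy : y ∈ A)
    (h : InNbhd A s (2 * δ)) : InNbhd s A (3 * δ) := by
  obtain ⟨γ, h0, hL, rfl, hγ⟩ := hs
  have hγ' : IsometricOn γ (Icc 0 (dist x y)) := hγ
  rintro _ ⟨u, hu, rfl⟩
  have hK (v w : ℝ) (hv : 0 ≤ v) (hw : w ≤ dist x y) : IsCompact (γ '' Icc v w) :=
    isCompact_Icc.image_of_continuousOn (hγ'.mono (Icc_subset_Icc hv hw)).continuousOn
  have hcover : InNbhd A (γ '' Icc 0 u ∪ γ '' Icc u (dist x y)) (2 * δ) := by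
    rwa [← image_union, Icc_union_Icc_eq_Icc hu.1 hu.2]
  obtain ⟨z, hzA, _, ⟨v₁, hv₁, rfl⟩, _, ⟨v₂, hv₂, rfl⟩, hd₁, hd₂⟩ :=
    hA.exists_near_of_inNbhd_union (hK 0 u le_rfl hu.2) (hK u _ hu.1 le_rfl) (by linarith) hcover
      ⟨x, hx, 0, left_mem_Icc.2 hu.1, h0⟩ ⟨y, hy, _, right_mem_Icc.2 hu.2, hL⟩
  have hsub : IsGeodesicSegment (γ '' Icc v₁ v₂) (γ v₁) (γ v₂) :=
    (hγ'.mono (Icc_subset_Icc hv₁.1 hv₂.2)).isGeodesicSegment (hv₁.2.trans hv₂.1)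
  have hclose := hhyp.dist_le_of_mem hgeo hsub (mem_image_of_mem γ ⟨hv₁.2, hv₂.1⟩) z
  rw [dist_comm (γ v₁), dist_comm (γ v₂)] at hclose
  exact ⟨z, hzA, by linarith [max_le hd₁ hd₂]⟩

theorem SlimTriangles.le_of_mem_anchored_quadrilateral {δ D m : ℝ} (hhyp : SlimTriangles Y δ)
    (hδ : 0 ≤ δ) (hgeo : IsGeodesicSpace Y) {S₀ s : Set Y} {q₁ q₂ x y₁ y₂ y y' : Y}
    (hS₀ : IsGeodesicSegment S₀ q₁ q₂) (hx : x ∈ S₀) (hs : IsGeodesicSegment s y y')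
    (hy₁ : y₁ ∈ s) (hy₂ : y₂ ∈ s) (hD : ∀ z ∈ s, D ≤ dist x z)
    (hq₁ : q₁ = y₁ ∨ (dist q₁ x = m ∧ dist q₁ y₁ ≤ D))
    (hq₂ : q₂ = y₂ ∨ (dist q₂ x = m ∧ dist q₂ y₂ ≤ D)) (hm : 4 * δ < m) : D ≤ 2 * δ := by
  obtain ⟨S₁, hS₁⟩ := hgeo q₁ y₁
  obtain ⟨S₂, hS₂⟩ := hgeo q₂ y₂
  obtain ⟨Sd, hSd⟩ := hgeo q₁ y₂
  obtain ⟨Sm, hSms, hSm⟩ := hs.exists_subsegment hy₂ hy₁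
  obtain ⟨w, hw | hw, hxw⟩ := (hhyp _ _ _ _ _ _ hS₀ hS₂ hSd).1 x hx
  · linarith [hS₂.le_of_anchor hw hxw (hD y₂ hy₂) hq₂ (by linarith)]
  obtain ⟨w', hw' | hw', hww'⟩ := (hhyp _ _ _ _ _ _ hSd hSm hS₁).1 w hw
  · linarith [hD w' (hSms hw'), dist_triangle x w w']
  · exact hS₁.le_of_anchor hw' (by linarith [dist_triangle x w w']) (hD y₁ hy₁) hq₁
      (by linarith)

theorem IsLocalGeodesicOn.inNbhd_geodesicSegment {δ a b : ℝ}
    {p : ℝ → Y} {s : Set Y} (hδ : 0 ≤ δ) (hgeo : IsGeodesicSpace Y) (hhyp : SlimTriangles Y δ)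
    (hab : a ≤ b) (hp : IsLocalGeodesicOn (8 * δ + 1) p a b)
    (hs : IsGeodesicSegment s (p a) (p b)) : InNbhd (p '' Icc a b) s (2 * δ) := by
  have hsc := hs.isCompact
  have hsne : s.Nonempty := ⟨_, hs.left_mem⟩
  obtain ⟨T, hT, hTmax⟩ := isCompact_Icc.exists_isMaxOn (nonempty_Icc.2 hab)
    ((continuous_infDist_pt s).comp_continuousOn (hp.continuousOn (by linarith)))
  set D := infDist (p T) s
  have hDle (t : ℝ) (ht : t ∈ Icc a b) : infDist (p t) s ≤ D := isMaxOn_iff.1 hTmax t ht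
  suffices hD : D ≤ 2 * δ by
    rintro _ ⟨t, ht, rfl⟩
    obtain ⟨y, hy, hty⟩ := hsc.exists_infDist_eq_dist hsne (p t)
    exact ⟨y, hy, hty ▸ (hDle t ht).trans hD⟩
  -- `2 * m` is the local geodesic scale, and `4 * δ < m` as the quadrilateral lemma needs.
  obtain ⟨m, hm⟩ : ∃ m : ℝ, m = 4 * δ + 1 / 2 := ⟨_, rfl⟩
  have exists_anchor (t : ℝ) (ht : t ∈ Icc a b) (hend : p t ∈ s ∨ dist (p t) (p T) = m) :
      ∃ y ∈ s, p t = y ∨ (dist (p t) (p T) = m ∧ dist (p t) y ≤ D) := by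
    rcases hend with hts | htT
    · exact ⟨p t, hts, Or.inl rfl⟩
    · obtain ⟨y, hy, hty⟩ := hsc.exists_infDist_eq_dist hsne (p t)
      exact ⟨y, hy, Or.inr ⟨htT, hty ▸ hDle t ht⟩⟩
  obtain ⟨t₁, ha₁, hm₁, ht₁⟩ : ∃ t₁, a ≤ t₁ ∧ T - m ≤ t₁ ∧ (t₁ = a ∨ t₁ = T - m) :=
    ⟨max a (T - m), le_max_left _ _, le_max_right _ _, max_choice _ _⟩
  obtain ⟨t₂, hb₂, hm₂, ht₂⟩ : ∃ t₂, t₂ ≤ b ∧ t₂ ≤ T + m ∧ (t₂ = b ∨ t₂ = T + m) :=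
    ⟨min b (T + m), min_le_left _ _, min_le_right _ _, min_choice _ _⟩
  have h₁T : t₁ ≤ T := by rcases ht₁ with rfl | rfl <;> linarith [hT.1]
  have hT₂ : T ≤ t₂ := by rcases ht₂ with rfl | rfl <;> linarith [hT.2]
  have hd₁ : dist (p t₁) (p T) = T - t₁ := hp _ _ ha₁ h₁T hT.2 (by linarith)
  have hd₂ : dist (p t₂) (p T) = t₂ - T := by
    rw [dist_comm]; exact hp _ _ hT.1 hT₂ hb₂ (by linarith)
  obtain ⟨y₁, hy₁, hq₁⟩ := exists_anchor t₁ ⟨ha₁, h₁T.trans hT.2⟩ <| by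
    rcases ht₁ with rfl | rfl
    · exact Or.inl hs.left_mem
    · exact Or.inr (by rw [hd₁]; ring)
  obtain ⟨y₂, hy₂, hq₂⟩ := exists_anchor t₂ ⟨hT.1.trans hT₂, hb₂⟩ <| by
    rcases ht₂ with rfl | rfl
    · exact Or.inl hs.right_mem
    · exact Or.inr (by rw [hd₂]; ring)
  have hS₀ : IsGeodesicSegment (p '' Icc t₁ t₂) (p t₁) (p t₂) :=
    (hp.isometricOn ha₁ hb₂ (by linarith)).isGeodesicSegment (h₁T.trans hT₂)
  exact hhyp.le_of_mem_anchored_quadrilateral hδ hgeo hS₀ (mem_image_of_mem p ⟨h₁T, hT₂⟩) hs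
    hy₁ hy₂ (fun y hy => infDist_le_dist_of_mem hy) hq₁ hq₂ (by linarith)

end Geodesic

theorem local_geodesic_close_to_geodesic {Y : Type*} [MetricSpace Y] (δ : ℝ) (hδ : 0 ≤ δ)
    (hgeo : IsGeodesicSpace Y) (hhyp : SlimTriangles Y δ)
    (p : ℝ → Y) (a b : ℝ) (hab : a ≤ b)
    (hp : IsLocalGeodesicOn (8 * δ + 1) p a b)
    (s : Set Y) (hs : IsGeodesicSegment s (p a) (p b)) :
    InNbhd (p '' Set.Icc a b) s (2 * δ) ∧ InNbhd s (p '' Set.Icc a b) (3 * δ) := by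
  have hnear := hp.inNbhd_geodesicSegment hδ hgeo hhyp hab hs
  refine ⟨hnear, hnear.geodesicSegment_of_isPreconnected hδ hgeo hhyp hs ?_
    (mem_image_of_mem p (left_mem_Icc.2 hab)) (mem_image_of_mem p (right_mem_Icc.2 hab))⟩
  exact isPreconnected_Icc.image p (hp.continuousOn (by linarith))
end

section
/- Let G be a group with generating set X such that the Cayley graph Γ(G,X) is δ-hyperbolic and the action of G on Γ(G,X) is acylindrical. Then there exist constants κ₀ ≥ 1 and ε₀ ≥ 0, depending only on (G,X), such that for every element g ∈ G which is loxodromic with respect to X and shortest in its conjugacy class, the bi-infinite path L(1,g) through the points gⁿ (n ∈ ℤ) is a (κ₀, ε₀)-quasi-geodesic. -/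
/-- Word length of `g` with respect to the generating set `X`. -/
noncomputable def wordLength {G : Type*} [Group G] (X : Set G) (g : G) : ℕ :=
  sInf {n : ℕ | ∃ l : List G, l.length = n ∧ (∀ x ∈ l, x ∈ X ∨ x⁻¹ ∈ X) ∧ l.prod = g}

/-- The word metric on `G` with respect to `X` (distance between vertices of the
Cayley graph `Γ(G,X)`). -/
noncomputable def wordDist {G : Type*} [Group G] (X : Set G) (g h : G) : ℕ :=
  wordLength X (g⁻¹ * h)

/-- Gromov product in the word metric. -/
noncomputable def gromovProd {G : Type*} [Group G] (X : Set G) (x y w : G) : ℝ :=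
  ((wordDist X w x : ℝ) + (wordDist X w y : ℝ) - (wordDist X x y : ℝ)) / 2

/-- The Cayley graph `Γ(G,X)` is `δ`-hyperbolic (four–point condition). -/
def CayleyHyperbolic {G : Type*} [Group G] (X : Set G) (δ : ℝ) : Prop :=
  ∀ x y z w : G, min (gromovProd X x z w) (gromovProd X z y w) - δ ≤ gromovProd X x y w

/-- The action of `G` on its Cayley graph `Γ(G,X)` is acylindrical. -/
def CayleyAcylindrical {G : Type*} [Group G] (X : Set G) : Prop :=
  ∀ ε : ℝ, 0 ≤ ε → ∃ R N : ℝ, 0 < R ∧ 0 < N ∧ ∀ g : G, R ≤ (wordLength X g : ℝ) →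
    {f : G | (wordLength X f : ℝ) ≤ ε ∧ (wordLength X (g⁻¹ * f * g) : ℝ) ≤ ε}.Finite ∧
    ({f : G | (wordLength X f : ℝ) ≤ ε ∧ (wordLength X (g⁻¹ * f * g) : ℝ) ≤ ε}.ncard : ℝ) ≤ N

/-- `g` is loxodromic with respect to `X`: `|gⁿ|_X ≥ ηn − ν` for some `η > 0`, `ν ≥ 0`. -/
def Loxodromic {G : Type*} [Group G] (X : Set G) (g : G) : Prop :=
  ∃ η : ℝ, 0 < η ∧ ∃ ν : ℝ, 0 ≤ ν ∧ ∀ n : ℕ, η * n - ν ≤ (wordLength X (g ^ n) : ℝ)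

/-- `g` is shortest in its conjugacy class. -/
def ShortestInConjClass {G : Type*} [Group G] (X : Set G) (g : G) : Prop :=
  ∀ h : G, wordLength X g ≤ wordLength X (h⁻¹ * g * h)

/-- `p : ℤ → G` is the bi-infinite path `L(1,g)` in `Γ(G,X)`, parametrized by arclength:
it starts at `1`, is `g`-periodic with period `|g|_X` (all periods bear the same label),
and traverses a geodesic from `1` to `g` on `[0, |g|_X]`. -/
def IsAxisPath {G : Type*} [Group G] (X : Set G) (g : G) (p : ℤ → G) : Prop :=
  p 0 = 1 ∧ (∀ t : ℤ, p (t + (wordLength X g : ℤ)) = g * p t) ∧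
    ∀ i j : ℤ, 0 ≤ i → i ≤ j → j ≤ (wordLength X g : ℤ) →
      (wordDist X (p i) (p j) : ℤ) = j - i

/-- `p : ℤ → G` is a `(κ,ε)`-quasi-geodesic for the word metric. -/
def IsQuasiGeodesicPath {G : Type*} [Group G] (X : Set G) (κ ε : ℝ) (p : ℤ → G) : Prop :=
  ∀ i j : ℤ, (1 / κ) * |(i : ℝ) - (j : ℝ)| - ε ≤ (wordDist X (p i) (p j) : ℝ) ∧
    (wordDist X (p i) (p j) : ℝ) ≤ κ * |(i : ℝ) - (j : ℝ)| + ε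

/-!
If `g` is shortest in its conjugacy class, a shortcut across one period of `L(1,g)` would conjugate
`g` to a shorter element, so every window of `L(1,g)` of length at most `|g|` is geodesic.
When `|g|` is large compared with `δ`, the axis is thus a concatenation of half periods, each
longer than `4δ`, any two consecutive ones forming a geodesic; the four-point condition then shows
that each half period adds its length up to an error `2δ`, so distances grow at rate `1/2`.
When `|g|` is small, points of the axis `q` periods apart differ by a conjugate of `g ^ q`; the
conjugate of `g` is again loxodromic, so Bowditch's bound gives it length at least `τ q`, and the
axis has slope at least `τ / |g|`.
-/

section

variable {G : Type*} [Group G] {X : Set G}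

theorem wordLength_spec (hX : Subgroup.closure X = ⊤) (g : G) :
    ∃ l : List G, l.length = wordLength X g ∧ (∀ x ∈ l, x ∈ X ∨ x⁻¹ ∈ X) ∧ l.prod = g := by
  have hg : g ∈ (Subgroup.closure X).toSubmonoid := by rw [hX]; trivial
  rw [Subgroup.closure_toSubmonoid] at hg
  obtain ⟨l, hl, hlg⟩ := Submonoid.exists_list_of_mem_closure hg
  have hne :
      {n : ℕ | ∃ l : List G, l.length = n ∧ (∀ x ∈ l, x ∈ X ∨ x⁻¹ ∈ X) ∧ l.prod = g}.Nonempty :=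
    ⟨l.length, l, rfl, hl, hlg⟩
  exact Nat.sInf_mem hne

theorem wordLength_prod_le {l : List G} (hl : ∀ x ∈ l, x ∈ X ∨ x⁻¹ ∈ X) :
    wordLength X l.prod ≤ l.length :=
  Nat.sInf_le ⟨l, rfl, hl, rfl⟩

@[simp]
theorem wordLength_one : wordLength X (1 : G) = 0 :=
  Nat.le_zero.mp (wordLength_prod_le (l := []) (by simp))

theorem wordLength_mul_le (hX : Subgroup.closure X = ⊤) (a b : G) :
    wordLength X (a * b) ≤ wordLength X a + wordLength X b := by
  obtain ⟨l₁, h₁, hl₁, rfl⟩ := wordLength_spec hX a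
  obtain ⟨l₂, h₂, hl₂, rfl⟩ := wordLength_spec hX b
  rw [← h₁, ← h₂, ← List.length_append, ← List.prod_append]
  exact wordLength_prod_le fun x hx => (List.mem_append.mp hx).elim (hl₁ x) (hl₂ x)

theorem wordLength_inv_le (hX : Subgroup.closure X = ⊤) (a : G) :
    wordLength X a⁻¹ ≤ wordLength X a := by
  obtain ⟨l, h, hl, rfl⟩ := wordLength_spec hX a
  rw [← h, List.prod_inv_reverse, ← List.length_map (f := fun x : G => x⁻¹), ← List.length_reverse]
  refine wordLength_prod_le fun x hx => ?_
  obtain ⟨y, hy, rfl⟩ := List.mem_map.mp (List.mem_reverse.mp hx)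
  rw [inv_inv]
  exact (hl y hy).symm

theorem wordLength_inv (hX : Subgroup.closure X = ⊤) (a : G) :
    wordLength X a⁻¹ = wordLength X a :=
  (wordLength_inv_le hX a).antisymm (by simpa using wordLength_inv_le hX a⁻¹)

theorem wordLength_le_conj (hX : Subgroup.closure X = ⊤) (a x : G) :
    wordLength X a ≤ wordLength X (x⁻¹ * a * x) + 2 * wordLength X x := by
  have h₁ := wordLength_mul_le hX (x * (x⁻¹ * a * x)) x⁻¹
  have h₂ := wordLength_mul_le hX x (x⁻¹ * a * x)
  rw [wordLength_inv hX, show x * (x⁻¹ * a * x) * x⁻¹ = a by group] at h₁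
  omega

theorem inv_mul_mul_pow (x g : G) (n : ℕ) : (x⁻¹ * g * x) ^ n = x⁻¹ * g ^ n * x := by
  simpa using conj_pow (a := x⁻¹) (b := g) (i := n)

theorem Loxodromic.conj (hX : Subgroup.closure X = ⊤) {g : G} (hg : Loxodromic X g) (x : G) :
    Loxodromic X (x⁻¹ * g * x) := by
  obtain ⟨η, hη, ν, hν, h⟩ := hg
  refine ⟨η, hη, ν + 2 * wordLength X x, by positivity, fun n => ?_⟩
  have := wordLength_le_conj hX (g ^ n) x
  rw [inv_mul_mul_pow]
  have : (wordLength X (g ^ n) : ℝ) ≤ wordLength X (x⁻¹ * g ^ n * x) + 2 * wordLength X x := by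
    exact_mod_cast this
  linarith [h n]

@[simp]
theorem wordDist_self (x : G) : wordDist X x x = 0 := by
  simp [wordDist]

theorem wordDist_comm (hX : Subgroup.closure X = ⊤) (x y : G) :
    wordDist X x y = wordDist X y x := by
  rw [wordDist, wordDist, ← wordLength_inv hX, mul_inv_rev, inv_inv]

theorem wordDist_triangle (hX : Subgroup.closure X = ⊤) (x y z : G) :
    wordDist X x z ≤ wordDist X x y + wordDist X y z := by
  simpa [wordDist, mul_assoc] using wordLength_mul_le hX (x⁻¹ * y) (y⁻¹ * z)

@[simp]
theorem wordDist_mul_left (a x y : G) : wordDist X (a * x) (a * y) = wordDist X x y := by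
  simp [wordDist, mul_assoc]

/-- The four-point condition at `b`: `(a|x)_b ≥ d(a,b) - δ > δ` forces `(x|c)_b ≤ δ`. -/
theorem CayleyHyperbolic.wordDist_add_le_of_between (hX : Subgroup.closure X = ⊤) {δ : ℝ}
    (hhyp : CayleyHyperbolic X δ) {x a b c : G}
    (hbetween : wordDist X a c = wordDist X a b + wordDist X b c)
    (hab : 2 * δ < wordDist X a b)
    (hxab : (wordDist X x a : ℝ) + wordDist X a b - 2 * δ ≤ wordDist X x b) :
    (wordDist X x b : ℝ) + wordDist X b c - 2 * δ ≤ wordDist X x c := by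
  have h := hhyp a c x b
  simp only [gromovProd] at h
  rw [wordDist_comm hX b a, wordDist_comm hX b x, wordDist_comm hX a x, hbetween] at h
  push_cast at h
  have hmin : min ((wordDist X a b + wordDist X x b - wordDist X x a : ℝ) / 2)
      ((wordDist X x b + wordDist X b c - wordDist X x c : ℝ) / 2) ≤ δ := by linarith
  rcases min_le_iff.mp hmin with h' | h' <;> linarith

namespace IsAxisPath

variable {g : G} {p : ℤ → G}

theorem apply_add_mul (hp : IsAxisPath X g p) (t k : ℤ) :
    p (t + k * wordLength X g) = g ^ k * p t := by
  induction k using Int.induction_on generalizing t with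
  | zero => simp
  | succ k ih =>
    rw [add_one_mul, ← add_assoc, hp.2.1, ih]
    group
  | pred k ih =>
    have h := hp.2.1 (t + (-k - 1) * wordLength X g)
    rw [show t + (-k - 1) * wordLength X g + wordLength X g = t + -k * wordLength X g by ring,
      ih] at h
    rw [eq_inv_mul_of_mul_eq h.symm]
    group

theorem wordDist_add_mul (hp : IsAxisPath X g p) (k i j : ℤ) :
    wordDist X (p (i + k * wordLength X g)) (p (j + k * wordLength X g)) =
      wordDist X (p i) (p j) := by
  rw [hp.apply_add_mul, hp.apply_add_mul, wordDist_mul_left]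

theorem wordDist_emod (hp : IsAxisPath X g p) (i s : ℤ) :
    wordDist X (p i) (p (i + s)) =
      wordDist X (p (i % wordLength X g)) (p (i % wordLength X g + s)) := by
  have h := hp.wordDist_add_mul (i / wordLength X g) (i % wordLength X g) (i % wordLength X g + s)
  rwa [Int.emod_add_ediv_mul, add_right_comm, Int.emod_add_ediv_mul] at h

theorem wordDist_add_one_le (hp : IsAxisPath X g p) (hM : 0 < wordLength X g) (t : ℤ) :
    wordDist X (p t) (p (t + 1)) ≤ 1 := by
  have h₀ := Int.emod_nonneg t (b := wordLength X g) (by omega)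
  have h₁ := Int.emod_lt_of_pos t (b := wordLength X g) (by omega)
  have := hp.2.2 (t % wordLength X g) (t % wordLength X g + 1) h₀ (by omega) (by omega)
  rw [hp.wordDist_emod]
  omega

theorem wordDist_le (hX : Subgroup.closure X = ⊤) (hp : IsAxisPath X g p)
    (hM : 0 < wordLength X g) (i : ℤ) (s : ℕ) : wordDist X (p i) (p (i + s)) ≤ s := by
  induction s with
  | zero => simp
  | succ s ih =>
    have := wordDist_triangle hX (p i) (p (i + s)) (p (i + s + 1))
    have := hp.wordDist_add_one_le hM (i + s)
    push_cast
    rw [← add_assoc]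
    omega

/-- A shortcut across a full period of the axis would conjugate `g` to a shorter element. -/
theorem wordDist_eq_of_le (hX : Subgroup.closure X = ⊤) (hp : IsAxisPath X g p)
    (hshort : ShortestInConjClass X g) (hM : 0 < wordLength X g) (i : ℤ) {s : ℕ}
    (hs : s ≤ wordLength X g) : wordDist X (p i) (p (i + s)) = s := by
  have hstep : ∀ u, p u = g * p (u - wordLength X g) := fun u => by
    rw [← hp.2.1, sub_add_cancel]
  have hlow : ∀ u, (wordLength X g : ℤ) ≤ wordDist X (p u) (p (u + wordLength X g)) := by
    intro u
    rw [hstep (u + _), add_sub_cancel_right, wordDist, ← mul_assoc]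
    exact_mod_cast hshort (p u)
  have h₀ := Int.emod_nonneg i (b := wordLength X g) (by omega)
  have h₁ := Int.emod_lt_of_pos i (b := wordLength X g) (by omega)
  have hs' : (s : ℤ) ≤ wordLength X g := by exact_mod_cast hs
  have hgeod := hp.2.2
  rw [hp.wordDist_emod]
  generalize (wordLength X g : ℤ) = M at *
  generalize i % M = t at *
  by_cases hts : t + s ≤ M
  · have := hgeod t (t + s) h₀ (by omega) hts
    omega
  have hback : (wordDist X (p (t + s)) (p (t + M)) : ℤ) = M - s := by
    rw [hstep (t + s), hstep (t + M), wordDist_mul_left, add_sub_cancel_right,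
      hgeod _ _ (by omega) (by omega) (by omega)]
    ring
  have hto : (wordDist X (p t) (p M) : ℤ) = M - t := hgeod _ _ h₀ h₁.le le_rfl
  have hfrom : (wordDist X (p M) (p (t + s)) : ℤ) = t + s - M := by
    rw [hstep M, hstep (t + s), wordDist_mul_left, sub_self,
      hgeod _ _ le_rfl (by omega) (by omega)]
    ring
  have := hlow t
  have := wordDist_triangle hX (p t) (p (t + s)) (p (t + M))
  have := wordDist_triangle hX (p t) (p M) (p (t + s))
  omega

theorem wordDist_add_sub_le_of_hyperbolic (hX : Subgroup.closure X = ⊤)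
    (hp : IsAxisPath X g p) (hshort : ShortestInConjClass X g) (hM : 0 < wordLength X g)
    {δ : ℝ} (hδ : 0 ≤ δ) (hhyp : CayleyHyperbolic X δ) {L : ℕ} (hL : 2 * δ < L)
    (hLM : 2 * L ≤ wordLength X g) (i : ℤ) (n : ℕ) {r : ℕ} (hr : r ≤ L) :
    (wordDist X (p i) (p (i + n * L)) : ℝ) + r - 2 * δ ≤ wordDist X (p i) (p (i + n * L + r)) := by
  induction n generalizing r with
  | zero =>
    rw [Nat.cast_zero, zero_mul, add_zero,
      hp.wordDist_eq_of_le hX hshort hM i (by omega), wordDist_self]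
    push_cast
    linarith
  | succ n ih =>
    rw [show i + ↑(n + 1) * ↑L = i + n * L + L by push_cast; ring]
    have hab := hp.wordDist_eq_of_le hX hshort hM (i + n * L) (s := L) (by omega)
    have hbc := hp.wordDist_eq_of_le hX hshort hM (i + n * L + L) (s := r) (by omega)
    have hac := hp.wordDist_eq_of_le hX hshort hM (i + n * L) (s := L + r) (by omega)
    rw [Nat.cast_add, ← add_assoc] at hac
    have key := hhyp.wordDist_add_le_of_between hX (x := p i)
      (c := p (i + n * L + L + r)) (by rw [hab, hbc, hac])
      (by rwa [hab]) (by rw [hab]; exact ih le_rfl)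
    rwa [hbc] at key

theorem mul_sub_le_wordDist_add_mul (hX : Subgroup.closure X = ⊤)
    (hp : IsAxisPath X g p) (hshort : ShortestInConjClass X g) (hM : 0 < wordLength X g)
    {δ : ℝ} (hδ : 0 ≤ δ) (hhyp : CayleyHyperbolic X δ) {L : ℕ} (hL : 2 * δ < L)
    (hLM : 2 * L ≤ wordLength X g) (i : ℤ) (n : ℕ) :
    n * (L - 2 * δ) ≤ wordDist X (p i) (p (i + n * L)) := by
  induction n with
  | zero => simp
  | succ n ih =>
    have := hp.wordDist_add_sub_le_of_hyperbolic hX hshort hM hδ hhyp hL hLM i n le_rfl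
    rw [show i + ↑(n + 1) * ↑L = i + n * L + L by push_cast; ring]
    push_cast
    linarith

theorem half_sub_le_wordDist (hX : Subgroup.closure X = ⊤)
    (hp : IsAxisPath X g p) (hshort : ShortestInConjClass X g) (hM : 0 < wordLength X g)
    {δ : ℝ} (hδ : 0 ≤ δ) (hhyp : CayleyHyperbolic X δ) {L : ℕ} (hL : 4 * δ < L)
    (hLM : 2 * L ≤ wordLength X g) (i : ℤ) (s : ℕ) :
    (s : ℝ) / 2 - 2 * δ ≤ wordDist X (p i) (p (i + s)) := by
  have hL₀ : 0 < L := by exact_mod_cast (by linarith : (0 : ℝ) < L)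
  have hL₂ : 2 * δ < L := by linarith
  have hs := Nat.div_add_mod' s L
  have hsR : (s : ℝ) = (s / L : ℕ) * L + (s % L : ℕ) := by exact_mod_cast hs.symm
  have hsZ : (s : ℤ) = (s / L : ℕ) * L + (s % L : ℕ) := by exact_mod_cast hs.symm
  rw [hsZ, ← add_assoc]
  have hstep := hp.wordDist_add_sub_le_of_hyperbolic hX hshort hM hδ hhyp hL₂ hLM i (s / L)
    (Nat.mod_lt s hL₀).le
  have hfull := hp.mul_sub_le_wordDist_add_mul hX hshort hM hδ hhyp hL₂ hLM i (s / L)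
  have hq : 4 * δ * (s / L : ℕ) ≤ L * (s / L : ℕ) :=
    mul_le_mul_of_nonneg_right hL.le (Nat.cast_nonneg _)
  linarith

theorem wordDist_add_mul_eq (hp : IsAxisPath X g p) (i : ℤ) (q : ℕ) :
    wordDist X (p i) (p (i + q * wordLength X g)) = wordLength X (((p i)⁻¹ * g * p i) ^ q) := by
  rw [hp.apply_add_mul, zpow_natCast, inv_mul_mul_pow, wordDist, mul_assoc]

theorem mul_div_sub_le_wordDist (hX : Subgroup.closure X = ⊤) (hp : IsAxisPath X g p)
    (hM : 0 < wordLength X g) {τ : ℝ} (hτ : 0 ≤ τ)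
    (hB : ∀ x : G, ∀ n : ℕ, τ * n ≤ wordLength X ((x⁻¹ * g * x) ^ n)) (i : ℤ) (s : ℕ) :
    τ * s / wordLength X g - (τ + wordLength X g) ≤ wordDist X (p i) (p (i + s)) := by
  set M := wordLength X g
  have hs := Nat.div_add_mod' s M
  have hr : s % M ≤ M := (Nat.mod_lt s hM).le
  have hsZ : (s : ℤ) = (s / M : ℕ) * M + (s % M : ℕ) := by exact_mod_cast hs.symm
  have hperiods := hB (p i) (s / M)
  rw [← hp.wordDist_add_mul_eq] at hperiods
  have htri := wordDist_triangle hX (p i) (p (i + s)) (p (i + (s / M : ℕ) * M))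
  have hrest := hp.wordDist_le hX hM (i + (s / M : ℕ) * M) (s % M)
  rw [wordDist_comm hX (p (i + s)), hsZ, ← add_assoc] at htri
  have hτs : τ * s / M ≤ τ * (s / M : ℕ) + τ := by
    rw [div_le_iff₀ (by exact_mod_cast hM)]
    have hsR : (s : ℝ) = (s / M : ℕ) * M + (s % M : ℕ) := by exact_mod_cast hs.symm
    have : τ * (s % M : ℕ) ≤ τ * M := mul_le_mul_of_nonneg_left (by exact_mod_cast hr) hτ
    rw [hsR]
    linarith
  have : (wordDist X (p i) (p (i + (s / M : ℕ) * M)) : ℝ) ≤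
      wordDist X (p i) (p (i + (s / M : ℕ) * M + (s % M : ℕ))) + (s % M : ℕ) := by
    exact_mod_cast htri.trans (Nat.add_le_add_left hrest _)
  rw [hsZ, ← add_assoc]
  have : ((s % M : ℕ) : ℝ) ≤ M := by exact_mod_cast hr
  linarith

end IsAxisPath

theorem isQuasiGeodesicPath_of_forall_add (hX : Subgroup.closure X = ⊤) {κ ε : ℝ} {p : ℤ → G}
    (h : ∀ (i : ℤ) (s : ℕ), (s : ℝ) / κ - ε ≤ wordDist X (p i) (p (i + s)) ∧
      (wordDist X (p i) (p (i + s)) : ℝ) ≤ κ * s + ε) :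
    IsQuasiGeodesicPath X κ ε p := by
  intro i j
  wlog hij : i ≤ j generalizing i j
  · rw [abs_sub_comm, wordDist_comm hX]
    exact this j i (le_of_not_ge hij)
  obtain ⟨s, rfl⟩ := Int.le.dest hij
  simpa [one_div, div_eq_inv_mul] using h i s

end

theorem axis_uniform_quasi_geodesic_general {G : Type*} [Group G] (X : Set G)
    (hX : Subgroup.closure X = ⊤)
    (δ : ℝ) (hδ : 0 ≤ δ) (hhyp : CayleyHyperbolic X δ)
    (τ : ℝ) (hτ : 0 < τ)
    (hBowditch : ∀ g : G, Loxodromic X g → ∀ n : ℕ, τ * n ≤ (wordLength X (g ^ n) : ℝ)) :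
    ∃ κ₀ : ℝ, 1 ≤ κ₀ ∧ ∃ ε₀ : ℝ, 0 ≤ ε₀ ∧
      ∀ g : G, Loxodromic X g → ShortestInConjClass X g →
        ∀ p : ℤ → G, IsAxisPath X g p → IsQuasiGeodesicPath X κ₀ ε₀ p := by
  -- beyond this threshold the half period `⌊|g|/2⌋` exceeds `4δ`
  set K : ℝ := 8 * δ + 2
  have hKτ : 0 < K / τ := by positivity
  refine ⟨K / τ + 2, by linarith, τ + K + 2 * δ, by positivity, fun g hlox hshort p hp => ?_⟩
  have hM : 0 < wordLength X g := by
    have := hBowditch g hlox 1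
    rw [pow_one, Nat.cast_one, mul_one] at this
    exact_mod_cast hτ.trans_le this
  refine isQuasiGeodesicPath_of_forall_add hX fun i s => ⟨?_, ?_⟩
  · have hhalf : s / (K / τ + 2) ≤ (s : ℝ) / 2 :=
      div_le_div_of_nonneg_left (Nat.cast_nonneg _) two_pos (by linarith)
    have hslope : s / (K / τ + 2) ≤ τ * s / K := by
      rw [mul_comm, ← div_div_eq_mul_div]
      exact div_le_div_of_nonneg_left (Nat.cast_nonneg _) hKτ (by linarith)
    rcases le_or_gt K (wordLength X g) with hlarge | hsmall
    · have hL : (wordLength X g : ℝ) ≤ 2 * (wordLength X g / 2 : ℕ) + 1 := by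
        exact_mod_cast (by omega : wordLength X g ≤ 2 * (wordLength X g / 2) + 1)
      have := hp.half_sub_le_wordDist hX hshort hM hδ hhyp (L := wordLength X g / 2)
        (by linarith) (Nat.mul_div_le _ _) i s
      linarith
    · have := hp.mul_div_sub_le_wordDist hX hM hτ.le
        (fun x => hBowditch _ (hlox.conj hX x)) i s
      have : τ * s / K ≤ τ * s / wordLength X g :=
        div_le_div_of_nonneg_left (by positivity) (by exact_mod_cast hM) hsmall.le
      linarith
  · have : (wordDist X (p i) (p (i + s)) : ℝ) ≤ s := by exact_mod_cast hp.wordDist_le hX hM i s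
    nlinarith [(Nat.cast_nonneg s : (0 : ℝ) ≤ s)]

theorem axis_uniform_quasi_geodesic {G : Type*} [Group G] (X : Set G)
    (hX : Subgroup.closure X = ⊤) (hsym : ∀ x ∈ X, x⁻¹ ∈ X)
    (δ : ℝ) (hδ : 0 ≤ δ) (hhyp : CayleyHyperbolic X δ)
    (hacyl : CayleyAcylindrical X)
    (τ : ℝ) (hτ : 0 < τ)
    (hBowditch : ∀ g : G, Loxodromic X g → ∀ n : ℕ, τ * n ≤ (wordLength X (g ^ n) : ℝ)) :
    ∃ κ₀ : ℝ, 1 ≤ κ₀ ∧ ∃ ε₀ : ℝ, 0 ≤ ε₀ ∧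
      ∀ g : G, Loxodromic X g → ShortestInConjClass X g →
        ∀ p : ℤ → G, IsAxisPath X g p → IsQuasiGeodesicPath X κ₀ ε₀ p :=
  axis_uniform_quasi_geodesic_general X hX δ hδ hhyp τ hτ hBowditch
end
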